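/- arXiv:2306.00274 — 4 statements merged into one kernel-verified Lean document; each statement's English description precedes it below -/
import Mathlib

section
/- Let M be a positive integer, λ > 0, and for each m ∈ {1,…,M} let μ_m > 0 and p_m ∈ (0,1) with Σ_{m=1}^M p_m = 1, and let t > 0. Set β_m = λ p_m/μ_m + t p_m. Then the vector x* given by x*_m = λ p_m/μ_m is the unique x ∈ ℝ^M satisfying all three of: (i) 0 ≤ x_m < β_m for every m; (ii) Σ_{m=1}^M μ_m x_m = λ; (iii) μ_m x_m/(β_m − x_m) = μ_{m'} x_{m'}/(β_{m'} − x_{m'}) for all m, m' ∈ {1,…,M}. -/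
/-- uniqueness of the ICRD fixed point. With `β_m = λ p_m/μ_m + t p_m`,
the vector `x*_m = λ p_m / μ_m` is the unique `x` with `0 ≤ x_m < β_m`,
`Σ μ_m x_m = λ`, and equalized `μ_m x_m / (β_m − x_m)` across pools. -/
theorem stmt1 (M : ℕ) (hM : 0 < M)
    (lam : ℝ) (hlam : 0 < lam)
    (mu p : Fin M → ℝ) (hmu : ∀ m, 0 < mu m)
    (hp : ∀ m, 0 < p m ∧ p m < 1) (hpsum : ∑ m, p m = 1)
    (t : ℝ) (ht : 0 < t) :
    ∀ x : Fin M → ℝ,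
      ((∀ m, 0 ≤ x m ∧ x m < lam * p m / mu m + t * p m) ∧
       (∑ m, mu m * x m = lam) ∧
       (∀ m m', mu m * x m / ((lam * p m / mu m + t * p m) - x m) =
         mu m' * x m' / ((lam * p m' / mu m' + t * p m') - x m'))) ↔
      x = fun m => lam * p m / mu m := by
  intro x
  have hxsum : ∑ m, mu m * (lam * p m / mu m) = lam := by
    have key : ∀ m : Fin M, mu m * (lam * p m / mu m) = lam * p m := by
      intro m; rw [mul_comm, div_mul_cancel₀ _ (hmu m).ne']
    rw [Finset.sum_congr rfl fun m _ => key m, ← Finset.mul_sum, hpsum, mul_one]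
  constructor
  · rintro ⟨hbound, hsum, heq⟩
    obtain ⟨β, hβ⟩ : ∃ β : Fin M → ℝ, β = fun m => lam * p m / mu m + t * p m := ⟨_, rfl⟩
    have hβpos : ∀ m, 0 < β m - x m := fun m => by
      have := (hbound m).2; rw [hβ]; simpa using by linarith
    have hβgt : ∀ m, 0 < β m := by
      intro m
      have hpm := (hp m).1
      have h1 : 0 < lam * p m / mu m := div_pos (mul_pos hlam hpm) (hmu m)
      have h2 : 0 < t * p m := mul_pos ht hpm
      rw [hβ]; simp only; linarith
    have hβeq : ∀ m, mu m * β m = lam * p m + t * p m * mu m := by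
      intro m; rw [hβ]; have := (hmu m).ne'; field_simp
    set m0 : Fin M := ⟨0, hM⟩ with hm0
    obtain ⟨r, hr⟩ : ∃ r : ℝ, r = mu m0 * x m0 / (β m0 - x m0) := ⟨_, rfl⟩
    have hr0 : 0 ≤ r := hr ▸ div_nonneg (mul_nonneg (hmu m0).le (hbound m0).1) (hβpos m0).le
    obtain ⟨s, hs⟩ : ∃ s : ℝ, s = lam / t := ⟨_, rfl⟩
    have hs0 : 0 < s := hs ▸ div_pos hlam ht
    have hxm : ∀ m, x m * (mu m + r) = r * β m := by
      intro m
      have h : mu m * x m / (β m - x m) = r := by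
        rw [hr]; simp only [hβ]; exact heq m m0
      have h2 : mu m * x m = r * (β m - x m) := by
        rw [← h, div_mul_eq_mul_div, mul_comm (mu m) (x m),
          mul_div_assoc, div_self (hβpos m).ne', mul_one, mul_comm]
      nlinarith [h2]
    have hmr : ∀ m, 0 < mu m + r := fun m => by have := hmu m; linarith
    have hms : ∀ m, 0 < mu m + s := fun m => by have := hmu m; linarith
    have hstar : ∀ m, lam * p m / mu m = s * β m / (mu m + s) := by
      intro m
      rw [eq_div_iff (hms m).ne', div_mul_eq_mul_div, div_eq_iff (hmu m).ne']
      have h1 := hβeq m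
      have h2 : s * t = lam := by rw [hs, div_mul_cancel₀ _ ht.ne']
      linear_combination (-s) * h1 - (p m * mu m) * h2
    have hkey : ∀ m : Fin M, mu m * x m - mu m * (lam * p m / mu m) =
        (r - s) * (mu m ^ 2 * β m / ((mu m + r) * (mu m + s))) := by
      intro m
      have hx : x m = r * β m / (mu m + r) := by
        rw [eq_div_iff (hmr m).ne']; exact hxm m
      rw [hx, hstar m]
      have h1 := (hmr m).ne'
      have h2 := (hms m).ne'
      field_simp
      ring
    have hsum2 : ∑ m, (mu m * x m - mu m * (lam * p m / mu m)) = 0 := by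
      rw [Finset.sum_sub_distrib, hsum, hxsum, sub_self]
    have hsum3 : (r - s) * ∑ m, (mu m ^ 2 * β m / ((mu m + r) * (mu m + s))) = 0 := by
      rw [Finset.mul_sum, ← Finset.sum_congr rfl fun m _ => hkey m, hsum2]
    have hpos : 0 < ∑ m, (mu m ^ 2 * β m / ((mu m + r) * (mu m + s))) := by
      apply Finset.sum_pos
      · intro m _
        exact div_pos (mul_pos (pow_pos (hmu m) 2) (hβgt m)) (mul_pos (hmr m) (hms m))
      · exact ⟨m0, Finset.mem_univ m0⟩
    have hrs : r = s := by
      rcases mul_eq_zero.mp hsum3 with h | h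
      · linarith
      · exact absurd h hpos.ne'
    funext m
    have hx : x m = r * β m / (mu m + r) := by
      rw [eq_div_iff (hmr m).ne']; exact hxm m
    show x m = lam * p m / mu m
    rw [hx, hrs, ← hstar m]
  · rintro rfl
    refine ⟨fun m => ?_, hxsum, fun m m' => ?_⟩
    · have hpm := (hp m).1
      have h1 : 0 ≤ lam * p m / mu m := (div_pos (mul_pos hlam hpm) (hmu m)).le
      have h2 : 0 < t * p m := mul_pos ht hpm
      exact ⟨h1, by linarith⟩
    · have key : ∀ k : Fin M,
        mu k * (lam * p k / mu k) / ((lam * p k / mu k + t * p k) - (lam * p k / mu k))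
          = lam / t := by
        intro k
        have h1 := (hmu k).ne'
        have h2 := (hp k).1.ne'
        have h3 := ht.ne'
        field_simp
        ring
      rw [key m, key m']
end

section
/- Let x be a sorted list of real numbers, l an index of x, and b a real number with b ≤ x_l. Then the sorted rearrangement of the list obtained from x by replacing its l-th entry with b is componentwise dominated by x. -/
/-!
Componentwise domination of lists is preserved by inserting a smaller element into the smaller
sorted list and a larger element into the larger one, hence by insertion sort. Replacing `x_l`
by `b ≤ x_l` gives a list dominated by `x`, and sorting it changes nothing on the right-hand
side because `x` is already sorted.
-/

namespace List

variable {α : Type*} [LinearOrder α]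

theorem Pairwise.orderedInsert_eq_cons {a : α} {l : List α} (h : (a :: l).Pairwise (· ≤ ·)) :
    l.orderedInsert (· ≤ ·) a = a :: l := by
  cases l with
  | nil => rfl
  | cons c l => exact orderedInsert_cons_of_le _ _ (rel_of_pairwise_cons h mem_cons_self)

theorem Forall₂.orderedInsert_le {a b : α} {s t : List α} (hab : a ≤ b)
    (hs : s.Pairwise (· ≤ ·)) (ht : t.Pairwise (· ≤ ·)) (hst : Forall₂ (· ≤ ·) s t) :
    Forall₂ (· ≤ ·) (s.orderedInsert (· ≤ ·) a) (t.orderedInsert (· ≤ ·) b) := by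
  induction hst generalizing a b with
  | nil => simpa using hab
  | @cons c d s t hcd hst ih =>
    have hs' := hs.of_cons
    have ht' := ht.of_cons
    by_cases hac : a ≤ c <;> by_cases hbd : b ≤ d
    · rw [orderedInsert_cons_of_le _ _ hac, orderedInsert_cons_of_le _ _ hbd]
      exact .cons hab (.cons hcd hst)
    · -- `c :: s` is `s` with `c` inserted, and `c ≤ d < b`
      rw [orderedInsert_cons_of_le _ _ hac, orderedInsert_of_not_le _ _ hbd,
        ← hs.orderedInsert_eq_cons]
      exact .cons (hac.trans hcd) (ih (hcd.trans (le_of_not_ge hbd)) hs' ht')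
    · -- `d :: t` is `t` with `d` inserted, and `c < a ≤ d`
      rw [orderedInsert_of_not_le _ _ hac, orderedInsert_cons_of_le _ _ hbd,
        ← ht.orderedInsert_eq_cons]
      exact .cons ((le_of_not_ge hac).trans hab) (ih (hab.trans hbd) hs' ht')
    · rw [orderedInsert_of_not_le _ _ hac, orderedInsert_of_not_le _ _ hbd]
      exact .cons hcd (ih hab hs' ht')

theorem Forall₂.insertionSort_le {s t : List α} (hst : Forall₂ (· ≤ ·) s t) :
    Forall₂ (· ≤ ·) (s.insertionSort (· ≤ ·)) (t.insertionSort (· ≤ ·)) := by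
  induction hst with
  | nil => exact .nil
  | cons hab _ ih =>
    exact ih.orderedInsert_le hab (pairwise_insertionSort _ _) (pairwise_insertionSort _ _)

theorem forall₂_set_le {x : List α} {l : ℕ} {b : α} (hb : ∀ h : l < x.length, b ≤ x[l]) :
    Forall₂ (· ≤ ·) (x.set l b) x := by
  rw [forall₂_iff_get]
  refine ⟨length_set, fun i _ hi => ?_⟩
  simp only [get_eq_getElem, getElem_set]
  split_ifs with h
  · subst h
    exact hb hi
  · exact le_rfl

end List

/-- replacing the `l`-th entry of a sorted list `x` by some `b ≤ x_l`
and re-sorting yields a list componentwise dominated by `x`. -/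
theorem stmt8 (x : List ℝ) (hx : x.Pairwise (· ≤ ·)) (l : ℕ) (hl : l < x.length)
    (b : ℝ) (hb : b ≤ x.get ⟨l, hl⟩) :
    List.Forall₂ (· ≤ ·) (List.insertionSort (· ≤ ·) (x.set l b)) x := by
  have hset : List.Forall₂ (· ≤ ·) (x.set l b) x := List.forall₂_set_le fun _ => hb
  simpa only [hx.insertionSort_eq] using hset.insertionSort_le
end

section
/- For every n ∈ ℕ, ρ^{n+1} ≤ ρⁿ, where ρⁿ is the infimum over all 2ⁿ×2ⁿ stochastic matrices p of max_{m∈{1,…,2ⁿ}} Σ_{h=1}^{2ⁿ} 2ⁿ λ^{(n)}_h p_{h,m} / μ^{*(n)}_{h,m}. -/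
open MeasureTheory Set Finset

/-- Integral of the arrival rate function over the `h`-th dyadic subinterval of
`[0,1]` at level `n`: `λ^{(n)}_h = ∫_{h/2ⁿ}^{(h+1)/2ⁿ} λ(x) dx`. -/
noncomputable def lamDyadic (lam : ℝ → ℝ) (n : ℕ) (h : Fin (2 ^ n)) : ℝ :=
  ∫ x in (((h : ℕ) : ℝ) / 2 ^ n)..((((h : ℕ) : ℝ) + 1) / 2 ^ n), lam x

/-- Minimum of `f` on the dyadic square
`[h/2ⁿ,(h+1)/2ⁿ] × [m/2ⁿ,(m+1)/2ⁿ]`, realized as the `sInf` of the image. -/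
noncomputable def muStarDyadic (f : ℝ × ℝ → ℝ) (n : ℕ) (h m : Fin (2 ^ n)) : ℝ :=
  sInf (f '' (Icc (((h : ℕ) : ℝ) / 2 ^ n) ((((h : ℕ) : ℝ) + 1) / 2 ^ n) ×ˢ
              Icc (((m : ℕ) : ℝ) / 2 ^ n) ((((m : ℕ) : ℝ) + 1) / 2 ^ n)))

/-- A matrix with entries in `[0,1]` and unit row sums. -/
def IsStochastic {H M : ℕ} (p : Fin H → Fin M → ℝ) : Prop :=
  (∀ h m, 0 ≤ p h m ∧ p h m ≤ 1) ∧ ∀ h, ∑ m, p h m = 1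

/-- `ρⁿ`: the infimum over all `2ⁿ×2ⁿ` stochastic matrices `p` of
`max_m Σ_h 2ⁿ λ^{(n)}_h p_{h,m} / μ^{*(n)}_{h,m}`. -/
noncomputable def rhoStar (f : ℝ × ℝ → ℝ) (lam : ℝ → ℝ) (n : ℕ) : ℝ :=
  sInf { r : ℝ | ∃ p : Fin (2 ^ n) → Fin (2 ^ n) → ℝ, IsStochastic p ∧
    r = ⨆ m : Fin (2 ^ n), ∑ h : Fin (2 ^ n),
      (2 ^ n : ℝ) * lamDyadic lam n h * p h m / muStarDyadic f n h m }


/-!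
Refine a stochastic matrix `p` of level `n` to `p'_{h',m'} = p_{⌊h'/2⌋,⌊m'/2⌋} / 2` at level
`n + 1`. It is again stochastic, and it loads no fine column more than `p` loads the parent column:
a fine square lies in its parent square, so its minimal service rate is at least the parent's, and
the two halves of `λ^{(n)}_h` add up to it.
Taking the infimum over `p` gives `ρ^{n+1} ≤ ρⁿ`.
-/

lemma IsCompact.sInf_image_pos {X : Type*} [TopologicalSpace X] {K : Set X} {g : X → ℝ}
    (hK : IsCompact K) (hne : K.Nonempty) (hg : ContinuousOn g K) (hpos : ∀ x ∈ K, 0 < g x) :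
    0 < sInf (g '' K) := by
  obtain ⟨x, hx, hmin⟩ := (hK.image_of_continuousOn hg).sInf_mem (hne.image g)
  exact hmin ▸ hpos x hx

lemma Fin.divNat_finProdFinEquiv {m k : ℕ} (a : Fin m) (b : Fin k) :
    (finProdFinEquiv (a, b)).divNat = a :=
  congrArg Prod.fst (finProdFinEquiv.symm_apply_apply (a, b))

lemma Fin.sum_univ_mul {β : Type*} [AddCommMonoid β] {M k : ℕ} (g : Fin (M * k) → β) :
    ∑ j, g j = ∑ a : Fin M, ∑ b : Fin k, g (finProdFinEquiv (a, b)) := by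
  rw [← Fintype.sum_equiv finProdFinEquiv _ g fun _ => rfl, Fintype.sum_prod_type]

section Stochastic

variable {H M : ℕ}

lemma isStochastic_uniform (hM : 0 < M) :
    IsStochastic fun (_ : Fin H) (_ : Fin M) => (M : ℝ)⁻¹ := by
  have hM' : (1 : ℝ) ≤ M := by exact_mod_cast hM
  refine ⟨fun _ _ => ⟨by positivity, inv_le_one_of_one_le₀ hM'⟩, fun _ => ?_⟩
  rw [sum_const, card_univ, Fintype.card_fin, nsmul_eq_mul, mul_inv_cancel₀ (by positivity)]

noncomputable def subdivide (k : ℕ) (p : Fin H → Fin M → ℝ) : Fin (H * k) → Fin (M * k) → ℝ :=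
  fun i j => p i.divNat j.divNat / k

lemma IsStochastic.subdivide {p : Fin H → Fin M → ℝ} (hp : IsStochastic p) (k : ℕ) [NeZero k] :
    IsStochastic (subdivide k p) := by
  have hk : (1 : ℝ) ≤ k := by exact_mod_cast NeZero.one_le
  refine ⟨fun i j => ⟨div_nonneg (hp.1 _ _).1 (by positivity), ?_⟩, fun i => ?_⟩
  · exact div_le_one_of_le₀ ((hp.1 _ _).2.trans hk) (by positivity)
  · simp only [_root_.subdivide, Fin.sum_univ_mul, Fin.divNat_finProdFinEquiv, sum_const,
      card_univ, Fintype.card_fin, nsmul_eq_mul]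
    simp_rw [mul_div_cancel₀ _ (NeZero.ne (k : ℝ))]
    exact hp.2 _

end Stochastic

section Dyadic

variable {n : ℕ}

def dyadicIcc (n i : ℕ) : Set ℝ := Icc ((i : ℝ) / 2 ^ n) (((i : ℝ) + 1) / 2 ^ n)

lemma dyadicIcc_subset_Icc_zero_one {i : ℕ} (hi : i < 2 ^ n) : dyadicIcc n i ⊆ Icc 0 1 := by
  have hi' : (i : ℝ) + 1 ≤ 2 ^ n := by exact_mod_cast hi
  exact Icc_subset_Icc (by positivity) ((div_le_one (by positivity)).2 hi')

lemma dyadicIcc_succ_subset (i : ℕ) : dyadicIcc (n + 1) i ⊆ dyadicIcc n (i / 2) := by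
  have hlo : 2 * ((i / 2 : ℕ) : ℝ) ≤ i := by exact_mod_cast Nat.mul_div_le i 2
  have hhi : (i : ℝ) + 1 ≤ 2 * ((i / 2 : ℕ) : ℝ) + 2 := by
    exact_mod_cast (by omega : i + 1 ≤ 2 * (i / 2) + 2)
  refine Icc_subset_Icc ?_ ?_
  · calc ((i / 2 : ℕ) : ℝ) / 2 ^ n = 2 * ((i / 2 : ℕ) : ℝ) / 2 ^ (n + 1) := by ring
      _ ≤ i / 2 ^ (n + 1) := by gcongr
  · calc ((i : ℝ) + 1) / 2 ^ (n + 1) ≤ (2 * ((i / 2 : ℕ) : ℝ) + 2) / 2 ^ (n + 1) := by gcongr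
      _ = (((i / 2 : ℕ) : ℝ) + 1) / 2 ^ n := by ring

lemma isCompact_dyadicIcc_prod (h m : ℕ) : IsCompact (dyadicIcc n h ×ˢ dyadicIcc n m) :=
  isCompact_Icc.prod isCompact_Icc

lemma nonempty_dyadicIcc_prod (h m : ℕ) : (dyadicIcc n h ×ˢ dyadicIcc n m).Nonempty :=
  (Set.nonempty_Icc.2 (by gcongr; linarith)).prod (Set.nonempty_Icc.2 (by gcongr; linarith))

variable {f : ℝ × ℝ → ℝ} {lam : ℝ → ℝ}

lemma dyadicIcc_prod_subset (h m : Fin (2 ^ n)) :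
    dyadicIcc n h ×ˢ dyadicIcc n m ⊆ Icc (0 : ℝ) 1 ×ˢ Icc (0 : ℝ) 1 :=
  prod_mono (dyadicIcc_subset_Icc_zero_one h.2) (dyadicIcc_subset_Icc_zero_one m.2)

lemma muStarDyadic_pos (hf : ContinuousOn f (Icc (0:ℝ) 1 ×ˢ Icc (0:ℝ) 1))
    (hfpos : ∀ z ∈ Icc (0:ℝ) 1 ×ˢ Icc (0:ℝ) 1, 0 < f z) (h m : Fin (2 ^ n)) :
    0 < muStarDyadic f n h m :=
  (isCompact_dyadicIcc_prod h m).sInf_image_pos (nonempty_dyadicIcc_prod h m)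
    (hf.mono (dyadicIcc_prod_subset h m)) fun z hz => hfpos z (dyadicIcc_prod_subset h m hz)

/-- `Fin (2 ^ n * 2)` is definitionally `Fin (2 ^ (n + 1))`; this form lets `Fin.divNat` pick the
parent interval. -/
lemma muStarDyadic_le_succ (hf : ContinuousOn f (Icc (0:ℝ) 1 ×ˢ Icc (0:ℝ) 1))
    (h m : Fin (2 ^ n * 2)) :
    muStarDyadic f n h.divNat m.divNat ≤ muStarDyadic f (n + 1) h m := by
  refine csInf_le_csInf ?_ ((nonempty_dyadicIcc_prod (n := n + 1) h m).image f) ?_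
  · exact ((isCompact_dyadicIcc_prod _ _).image_of_continuousOn
      (hf.mono (dyadicIcc_prod_subset h.divNat m.divNat))).bddBelow
  · exact image_mono
      (prod_mono (dyadicIcc_succ_subset (n := n) h) (dyadicIcc_succ_subset (n := n) m))

lemma lamDyadic_nonneg (hlam : ∀ x ∈ Icc (0:ℝ) 1, 0 ≤ lam x) (h : Fin (2 ^ n)) :
    0 ≤ lamDyadic lam n h :=
  intervalIntegral.integral_nonneg (by gcongr; linarith)
    fun x hx => hlam x (dyadicIcc_subset_Icc_zero_one h.2 hx)

lemma sum_lamDyadic_succ (hint : IntegrableOn lam (Icc 0 1)) (a : Fin (2 ^ n)) :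
    ∑ b : Fin 2, lamDyadic lam (n + 1) (finProdFinEquiv (a, b)) = lamDyadic lam n a := by
  set lo : ℝ := (a : ℝ) / 2 ^ n
  set hi : ℝ := ((a : ℝ) + 1) / 2 ^ n
  have hle : lo ≤ hi := by simp only [lo, hi]; gcongr; linarith
  have hI : IntervalIntegrable lam volume lo hi :=
    (intervalIntegrable_iff_integrableOn_Icc_of_le hle).2
      (hint.mono_set (dyadicIcc_subset_Icc_zero_one a.2))
  have hmid : (lo + hi) / 2 ∈ uIcc lo hi := by rw [uIcc_of_le hle]; constructor <;> linarith
  unfold lamDyadic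
  rw [Fin.sum_univ_two, ← intervalIntegral.integral_add_adjacent_intervals
      (hI.mono_set (uIcc_subset_uIcc left_mem_uIcc hmid))
      (hI.mono_set (uIcc_subset_uIcc hmid right_mem_uIcc))]
  congr 2 <;> simp only [lo, hi, finProdFinEquiv_apply_val, Fin.val_zero, Fin.val_one] <;>
    push_cast <;> ring

end Dyadic

section Load

variable {f : ℝ × ℝ → ℝ} {lam : ℝ → ℝ} {n : ℕ}

noncomputable def dyadicLoad (f : ℝ × ℝ → ℝ) (lam : ℝ → ℝ) (n : ℕ)
    (p : Fin (2 ^ n) → Fin (2 ^ n) → ℝ) (m : Fin (2 ^ n)) : ℝ :=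
  ∑ h, (2 ^ n : ℝ) * lamDyadic lam n h * p h m / muStarDyadic f n h m

lemma dyadicLoad_nonneg (hf : ContinuousOn f (Icc (0:ℝ) 1 ×ˢ Icc (0:ℝ) 1))
    (hfpos : ∀ z ∈ Icc (0:ℝ) 1 ×ˢ Icc (0:ℝ) 1, 0 < f z) (hlam : ∀ x ∈ Icc (0:ℝ) 1, 0 ≤ lam x)
    {p : Fin (2 ^ n) → Fin (2 ^ n) → ℝ} (hp : ∀ h m, 0 ≤ p h m)
    (m : Fin (2 ^ n)) : 0 ≤ dyadicLoad f lam n p m :=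
  sum_nonneg fun h _ => div_nonneg
    (mul_nonneg (mul_nonneg (by positivity) (lamDyadic_nonneg hlam h)) (hp h m))
    (muStarDyadic_pos hf hfpos h m).le

lemma rhoStar_le_iSup_dyadicLoad (hf : ContinuousOn f (Icc (0:ℝ) 1 ×ˢ Icc (0:ℝ) 1))
    (hfpos : ∀ z ∈ Icc (0:ℝ) 1 ×ˢ Icc (0:ℝ) 1, 0 < f z) (hlam : ∀ x ∈ Icc (0:ℝ) 1, 0 ≤ lam x)
    {p : Fin (2 ^ n) → Fin (2 ^ n) → ℝ} (hp : IsStochastic p) :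
    rhoStar f lam n ≤ ⨆ m, dyadicLoad f lam n p m := by
  refine csInf_le ⟨0, ?_⟩ ⟨p, hp, rfl⟩
  rintro _ ⟨q, hq, rfl⟩
  exact Real.iSup_nonneg (dyadicLoad_nonneg hf hfpos hlam fun h m => (hq.1 h m).1)

lemma dyadicLoad_subdivide_le (hf : ContinuousOn f (Icc (0:ℝ) 1 ×ˢ Icc (0:ℝ) 1))
    (hfpos : ∀ z ∈ Icc (0:ℝ) 1 ×ˢ Icc (0:ℝ) 1, 0 < f z) (hlam : ∀ x ∈ Icc (0:ℝ) 1, 0 ≤ lam x)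
    (hint : IntegrableOn lam (Icc 0 1))
    {p : Fin (2 ^ n) → Fin (2 ^ n) → ℝ} (hp : ∀ h m, 0 ≤ p h m) (m : Fin (2 ^ n * 2)) :
    dyadicLoad f lam (n + 1) (subdivide 2 p) m ≤ dyadicLoad f lam n p m.divNat := by
  calc dyadicLoad f lam (n + 1) (subdivide 2 p) m
      ≤ ∑ h : Fin (2 ^ n * 2), (2 ^ (n + 1) : ℝ) * lamDyadic lam (n + 1) h * subdivide 2 p h m /
          muStarDyadic f n h.divNat m.divNat := by
        refine sum_le_sum fun h _ => div_le_div_of_nonneg_left ?_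
          (muStarDyadic_pos hf hfpos _ _) (muStarDyadic_le_succ hf h m)
        exact mul_nonneg (mul_nonneg (by positivity) (lamDyadic_nonneg hlam h))
          (div_nonneg (hp _ _) (by positivity))
    _ = dyadicLoad f lam n p m.divNat := by
        rw [Fin.sum_univ_mul]
        refine sum_congr rfl fun a _ => ?_
        simp only [subdivide, Fin.divNat_finProdFinEquiv, ← sum_lamDyadic_succ hint a]
        rw [mul_sum, sum_mul, sum_div]
        refine sum_congr rfl fun b _ => ?_
        push_cast
        ring

end Load

/-- `ρ^{n+1} ≤ ρⁿ` for every `n` (monotonicity of the worst-case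
dyadic load under refinement, first claim of Lemma C.1). -/
theorem stmt10 (f : ℝ × ℝ → ℝ)
    (hf : ContinuousOn f (Icc (0:ℝ) 1 ×ˢ Icc (0:ℝ) 1))
    (hfpos : ∀ z ∈ Icc (0:ℝ) 1 ×ˢ Icc (0:ℝ) 1, 0 < f z)
    (lam : ℝ → ℝ) (hlam : ∀ x ∈ Icc (0:ℝ) 1, 0 ≤ lam x)
    (hint : IntegrableOn lam (Icc 0 1)) (n : ℕ) :
    rhoStar f lam (n + 1) ≤ rhoStar f lam n := by
  refine le_csInf ⟨_, _, isStochastic_uniform (Nat.two_pow_pos n), rfl⟩ ?_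
  rintro _ ⟨p, hp, rfl⟩
  calc rhoStar f lam (n + 1) ≤ ⨆ m, dyadicLoad f lam (n + 1) (subdivide 2 p) m :=
        rhoStar_le_iSup_dyadicLoad hf hfpos hlam (hp.subdivide 2)
    _ ≤ ⨆ m, dyadicLoad f lam n p m := ciSup_le fun m =>
        (dyadicLoad_subdivide_le hf hfpos hlam hint (fun h m => (hp.1 h m).1) m).trans
          (le_ciSup (finite_range _).bddAbove m.divNat)
end

section
/- Suppose f : [0,1]² → ℝ is Lipschitz continuous with f(x,y) > 0 for all (x,y), and λ : [0,1] → ℝ is nonnegative and integrable. Suppose there exist partitions 0 = w_0 < w_1 < ⋯ < w_H = 1 and 0 = v_0 < v_1 < ⋯ < v_M = 1 of [0,1], an H×M stochastic matrix p, and a real ρ* with max_{m} Σ_{h=1}^H p_{h,m} λ_h / ((v_m − v_{m−1}) μ*_{h,m}) < ρ*, where λ_h = ∫_{w_{h−1}}^{w_h} λ(x) dx and μ*_{h,m} = min of f on [w_{h−1}, w_h] × [v_{m−1}, v_m]. Then there exists n ∈ ℕ and a 2ⁿ×2ⁿ stochastic matrix p' such that for every m̂ ∈ {1,…,2ⁿ}: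 Σ_{ĥ=1}^{2ⁿ} 2ⁿ λ^{(n)}_{ĥ} p'_{ĥ,m̂} / μ^{*(n)}_{ĥ,m̂} < ρ*; equivalently ρⁿ < ρ*. -/
/-!
Refine the partition `(w, v)` to the dyadic grid of mesh `δ = 2⁻ⁿ`. Dyadic cell `i` sends the
fraction `2ⁿ |[w_{h-1}, w_h] ∩ cell i|` of its arrivals to row `h` of `p`, and the mass that `p`
assigns to server block `m` is spread over the dyadic cells `j` in proportion to
`|[v_{m-1}, v_m] ∩ cell j|`; both refinement matrices are stochastic, hence so is their product
`p'` with `p`. Where a dyadic square meets a rectangle of the old partition, the Lipschitz bound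
gives `μ* ≥ μ*_{h,m} - K δ` on it, and the arrivals routed to row `h` come from the
`δ`-neighbourhood of `[w_{h-1}, w_h]`. So every column load of `p'` is a convex combination of
perturbed loads, which tend to the original loads (all below `ρ*`) as `δ → 0`.
-/

open MeasureTheory Set Finset

open Filter Topology Function

noncomputable def overlap (a b c d : ℝ) : ℝ := max 0 (min b d - max a c)

section Overlap
variable {a b c d : ℝ}

lemma overlap_nonneg : 0 ≤ overlap a b c d := le_max_left _ _

lemma overlap_comm : overlap a b c d = overlap c d a b := by
  rw [overlap, overlap, min_comm, max_comm c]

lemma overlap_le_sub (hcd : c ≤ d) : overlap a b c d ≤ d - c :=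
  max_le (sub_nonneg.2 hcd) (by linarith [min_le_right b d, le_max_right a c])

lemma overlap_eq_sub (hab : a ≤ b) (hcd : c ≤ d) :
    overlap a b c d = max c (min d b) - max c (min d a) := by
  unfold overlap
  rcases le_total a c with h1 | h1 <;> rcases le_total a d with h2 | h2 <;>
    rcases le_total b c with h3 | h3 <;> rcases le_total b d with h4 | h4 <;>
    simp only [max_def, min_def] <;> split_ifs <;> linarith

lemma max_mem_inter_of_overlap_pos (h : 0 < overlap a b c d) :
    max a c ∈ Icc a b ∩ Icc c d := by
  have : max a c < min b d := by
    by_contra! hle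
    exact h.ne' (max_eq_left (by linarith))
  exact ⟨⟨le_max_left _ _, by linarith [min_le_left b d]⟩,
    ⟨le_max_right _ _, by linarith [min_le_right b d]⟩⟩

end Overlap

lemma Fin.sum_succ_sub_castSucc {G : Type*} [AddCommGroup G] {N : ℕ} (g : Fin (N + 1) → G) :
    ∑ i : Fin N, (g i.succ - g i.castSucc) = g (Fin.last N) - g 0 := by
  rw [sum_sub_distrib, sub_eq_sub_iff_add_eq_add, add_comm, ← Fin.sum_univ_succ,
    Fin.sum_univ_castSucc, add_comm]

lemma sum_overlap_partition {N : ℕ} {w : Fin (N + 1) → ℝ} (hw : Monotone w) {c d : ℝ}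
    (hcd : c ≤ d) (hc : w 0 ≤ c) (hd : d ≤ w (Fin.last N)) :
    ∑ h : Fin N, overlap (w h.castSucc) (w h.succ) c d = d - c := by
  rw [Finset.sum_congr rfl fun h _ => overlap_eq_sub (hw (Fin.castSucc_le_succ h)) hcd,
    Fin.sum_succ_sub_castSucc (fun t => max c (min d (w t))), min_eq_left hd, max_eq_right hcd,
    min_eq_right (hc.trans hcd), max_eq_left hc]

section Dyadic
variable {n : ℕ}

lemma dyadic_left_nonneg (i : Fin (2 ^ n)) : 0 ≤ ((i : ℕ) : ℝ) / 2 ^ n := by positivity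

lemma dyadic_right_le_one (i : Fin (2 ^ n)) : (((i : ℕ) : ℝ) + 1) / 2 ^ n ≤ 1 := by
  rw [div_le_one (by positivity)]
  exact_mod_cast i.isLt

lemma dyadic_right_sub_left (i : Fin (2 ^ n)) :
    (((i : ℕ) : ℝ) + 1) / 2 ^ n - ((i : ℕ) : ℝ) / 2 ^ n = ((2 : ℝ) ^ n)⁻¹ := by
  field_simp
  ring

lemma dyadic_left_le_right (i : Fin (2 ^ n)) :
    ((i : ℕ) : ℝ) / 2 ^ n ≤ (((i : ℕ) : ℝ) + 1) / 2 ^ n := by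
  have := dyadic_right_sub_left i
  have : (0 : ℝ) < ((2 : ℝ) ^ n)⁻¹ := by positivity
  linarith

lemma dyadic_square_subset (i j : Fin (2 ^ n)) :
    Icc (((i : ℕ) : ℝ) / 2 ^ n) ((((i : ℕ) : ℝ) + 1) / 2 ^ n) ×ˢ
      Icc (((j : ℕ) : ℝ) / 2 ^ n) ((((j : ℕ) : ℝ) + 1) / 2 ^ n) ⊆
      Icc (0 : ℝ) 1 ×ˢ Icc (0 : ℝ) 1 :=
  prod_mono (Icc_subset_Icc (dyadic_left_nonneg i) (dyadic_right_le_one i))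
    (Icc_subset_Icc (dyadic_left_nonneg j) (dyadic_right_le_one j))

end Dyadic

noncomputable def cellOverlap (a b : ℝ) (n : ℕ) (i : Fin (2 ^ n)) : ℝ :=
  overlap a b (((i : ℕ) : ℝ) / 2 ^ n) ((((i : ℕ) : ℝ) + 1) / 2 ^ n)

lemma sum_cellOverlap {a b : ℝ} (hab : a ≤ b) (ha : 0 ≤ a) (hb : b ≤ 1) (n : ℕ) :
    ∑ i, cellOverlap a b n i = b - a := by
  let pt : Fin (2 ^ n + 1) → ℝ := fun k => ((k : ℕ) : ℝ) / 2 ^ n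
  have hpt : Monotone pt := fun k l hkl => by
    simp only [pt]; gcongr; exact_mod_cast hkl
  have hlast : pt (Fin.last _) = 1 := by simp [pt]
  have hcell (i : Fin (2 ^ n)) :
      cellOverlap a b n i = overlap (pt i.castSucc) (pt i.succ) a b := by
    simp [cellOverlap, pt, overlap_comm]
  simp only [hcell]
  exact sum_overlap_partition hpt hab (by simpa [pt] using ha) (hlast ▸ hb)

lemma sum_cellOverlap_partition {N : ℕ} {w : Fin (N + 1) → ℝ} (hw0 : w 0 = 0)
    (hw1 : w (Fin.last N) = 1) (hw : Monotone w) {n : ℕ} (i : Fin (2 ^ n)) :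
    ∑ h : Fin N, cellOverlap (w h.castSucc) (w h.succ) n i = ((2 : ℝ) ^ n)⁻¹ := by
  rw [← dyadic_right_sub_left i]
  exact sum_overlap_partition hw (dyadic_left_le_right i) (hw0 ▸ dyadic_left_nonneg i)
    (hw1 ▸ dyadic_right_le_one i)

lemma IsStochastic.of_nonneg {H M : ℕ} {p : Fin H → Fin M → ℝ} (h0 : ∀ h m, 0 ≤ p h m)
    (h1 : ∀ h, ∑ m, p h m = 1) : IsStochastic p :=
  ⟨fun h m => ⟨h0 h m, h1 h ▸ single_le_sum (fun m _ => h0 h m) (mem_univ m)⟩, h1⟩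

lemma IsStochastic.mul {H M K : ℕ} {p : Fin H → Fin M → ℝ} {q : Fin M → Fin K → ℝ}
    (hp : IsStochastic p) (hq : IsStochastic q) :
    IsStochastic fun h k => ∑ m, p h m * q m k := by
  refine .of_nonneg (fun h k => sum_nonneg fun m _ => mul_nonneg (hp.1 h m).1 (hq.1 m k).1)
    fun h => ?_
  rw [sum_comm]
  simp_rw [← mul_sum, hq.2, mul_one, hp.2]

lemma isStochastic_cellWeights {N : ℕ} {w : Fin (N + 1) → ℝ} (hw0 : w 0 = 0)
    (hw1 : w (Fin.last N) = 1) (hw : Monotone w) (n : ℕ) :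
    IsStochastic fun (i : Fin (2 ^ n)) (h : Fin N) =>
      2 ^ n * cellOverlap (w h.castSucc) (w h.succ) n i :=
  .of_nonneg (fun _ _ => mul_nonneg (by positivity) overlap_nonneg) fun i => by
    rw [← mul_sum, sum_cellOverlap_partition hw0 hw1 hw, mul_inv_cancel₀ (by positivity)]

lemma isStochastic_cellShares {M : ℕ} {v : Fin (M + 1) → ℝ} (hv0 : v 0 = 0)
    (hv1 : v (Fin.last M) = 1) (hv : StrictMono v) (n : ℕ) :
    IsStochastic fun (m : Fin M) (j : Fin (2 ^ n)) =>
      cellOverlap (v m.castSucc) (v m.succ) n j / (v m.succ - v m.castSucc) := by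
  have hlt (m : Fin M) : v m.castSucc < v m.succ := hv (Fin.castSucc_lt_succ (i := m))
  refine .of_nonneg (fun m _ => div_nonneg overlap_nonneg (sub_pos.2 (hlt m)).le) fun m => ?_
  rw [← sum_div, sum_cellOverlap (hlt m).le (hv0 ▸ hv.monotone (Fin.zero_le _))
    (hv1 ▸ hv.monotone (Fin.le_last _)), div_self (sub_pos.2 (hlt m)).ne']

lemma LipschitzOnWith.sInf_image_sub_mul_le_sInf_image {X : Type*} [PseudoMetricSpace X]
    {f : X → ℝ} {K : NNReal} {U s t : Set X} (hf : LipschitzOnWith K f U) (hs : s ⊆ U)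
    (ht : t ⊆ U) (hbdd : BddBelow (f '' s)) (hne : t.Nonempty) {δ : ℝ}
    (hst : ∀ z ∈ t, ∃ z' ∈ s, dist z z' ≤ δ) :
    sInf (f '' s) - K * δ ≤ sInf (f '' t) := by
  refine le_csInf (hne.image f) ?_
  rintro _ ⟨z, hz, rfl⟩
  obtain ⟨z', hz', hdist⟩ := hst z hz
  have hinf : sInf (f '' s) ≤ f z' := csInf_le hbdd (mem_image_of_mem f hz')
  have hlip : |f z - f z'| ≤ K * δ := calc
    |f z - f z'| = dist (f z) (f z') := (Real.dist_eq _ _).symm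
    _ ≤ K * dist z z' := hf.dist_le_mul z (ht hz) z' (hs hz')
    _ ≤ K * δ := by gcongr
  linarith [neg_abs_le (f z - f z')]

lemma IsCompact.sInf_image_pos_s13 {X : Type*} [TopologicalSpace X] {f : X → ℝ} {s : Set X}
    (hs : IsCompact s) (hne : s.Nonempty) (hf : ContinuousOn f s) (hpos : ∀ z ∈ s, 0 < f z) :
    0 < sInf (f '' s) := by
  obtain ⟨z, hz, hmin⟩ := hs.exists_sInf_image_eq hne hf
  exact hmin ▸ hpos z hz

lemma pairwise_disjoint_dyadic_Ioc (n : ℕ) :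
    Pairwise (Disjoint on fun i : Fin (2 ^ n) =>
      Ioc (((i : ℕ) : ℝ) / 2 ^ n) ((((i : ℕ) : ℝ) + 1) / 2 ^ n)) := by
  have hmono : Monotone fun k : ℕ => (k : ℝ) / 2 ^ n := fun k l hkl => by
    simp only; gcongr
  simpa [Function.onFun] using
    hmono.pairwise_disjoint_on_Ioc_succ.comp_of_injective (Fin.val_injective (n := 2 ^ n))

lemma sum_cellOverlap_mul_integral_le {g : ℝ → ℝ} (hg : Integrable g) (hg0 : ∀ x, 0 ≤ g x)
    {a b : ℝ} (hab : a ≤ b) (n : ℕ) :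
    ∑ i, 2 ^ n * cellOverlap a b n i *
        ∫ x in (((i : ℕ) : ℝ) / 2 ^ n)..((((i : ℕ) : ℝ) + 1) / 2 ^ n), g x ≤
      ∫ x in (a - ((2 : ℝ) ^ n)⁻¹)..(b + ((2 : ℝ) ^ n)⁻¹), g x := by
  set δ : ℝ := ((2 : ℝ) ^ n)⁻¹
  let cell : Fin (2 ^ n) → Set ℝ := fun i =>
    Ioc (((i : ℕ) : ℝ) / 2 ^ n) ((((i : ℕ) : ℝ) + 1) / 2 ^ n)
  let S := univ.filter fun i : Fin (2 ^ n) => 0 < cellOverlap a b n i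
  have hcell_sub : (⋃ i ∈ S, cell i) ⊆ Ioc (a - δ) (b + δ) := by
    refine iUnion₂_subset fun i hi => Ioc_subset_Ioc ?_ ?_
    all_goals
      obtain ⟨⟨-, hb⟩, ⟨-, hd⟩⟩ := max_mem_inter_of_overlap_pos (mem_filter.1 hi).2
      linarith [dyadic_right_sub_left i, le_max_left a (((i : ℕ) : ℝ) / 2 ^ n),
        le_max_right a (((i : ℕ) : ℝ) / 2 ^ n)]
  calc ∑ i, 2 ^ n * cellOverlap a b n i *
        ∫ x in (((i : ℕ) : ℝ) / 2 ^ n)..((((i : ℕ) : ℝ) + 1) / 2 ^ n), g x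
      = ∑ i ∈ S, 2 ^ n * cellOverlap a b n i * ∫ x in cell i, g x := by
        rw [sum_filter_of_ne]
        · refine sum_congr rfl fun i _ => ?_
          rw [intervalIntegral.integral_of_le (dyadic_left_le_right i)]
        · intro i _ hi
          exact overlap_nonneg.lt_of_ne' fun h => hi (by simp [cellOverlap, h])
    _ ≤ ∑ i ∈ S, ∫ x in cell i, g x := by
        refine sum_le_sum fun i _ => mul_le_of_le_one_left (setIntegral_nonneg measurableSet_Ioc
          fun x _ => hg0 x) ?_
        have : cellOverlap a b n i ≤ δ :=
          (overlap_le_sub (dyadic_left_le_right i)).trans_eq (dyadic_right_sub_left i)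
        calc (2 : ℝ) ^ n * cellOverlap a b n i ≤ 2 ^ n * δ := by gcongr
          _ = 1 := mul_inv_cancel₀ (by positivity)
    _ = ∫ x in ⋃ i ∈ S, cell i, g x :=
        (integral_biUnion_finset S (fun _ _ => measurableSet_Ioc)
          ((pairwise_disjoint_dyadic_Ioc n).set_pairwise _)
          fun _ _ => hg.integrableOn).symm
    _ ≤ ∫ x in Ioc (a - δ) (b + δ), g x :=
        setIntegral_mono_set hg.integrableOn (Eventually.of_forall hg0) hcell_sub.eventuallyLE
    _ = ∫ x in (a - δ)..(b + δ), g x := by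
        have : 0 < δ := by positivity
        rw [intervalIntegral.integral_of_le (by linarith)]

lemma sum_mul_sum_mul_sum_div_le {ι κ τ : Type*} [Fintype ι] [Fintype κ] [Fintype τ]
    {x μ : ι → ℝ} {a : ι → κ → ℝ} {p μ' : κ → τ → ℝ} {b : τ → ℝ}
    (hx : ∀ i, 0 ≤ x i) (ha : ∀ i k, 0 ≤ a i k) (hp : ∀ k t, 0 ≤ p k t)
    (hb : ∀ t, 0 ≤ b t) (hμ' : ∀ k t, 0 < μ' k t)
    (hle : ∀ i k t, 0 < a i k → 0 < b t → μ' k t ≤ μ i) :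
    ∑ i, x i * (∑ k, a i k * ∑ t, p k t * b t) / μ i ≤
      ∑ t, b t * ∑ k, p k t * (∑ i, x i * a i k) / μ' k t := by
  have hterm (i : ι) (k : κ) (t : τ) :
      x i * a i k * p k t * b t / μ i ≤ x i * a i k * p k t * b t / μ' k t := by
    rcases (ha i k).eq_or_lt with hak | hak
    · simp [← hak]
    rcases (hb t).eq_or_lt with hbt | hbt
    · simp [← hbt]
    exact div_le_div_of_nonneg_left (by have := hx i; have := hp k t; positivity) (hμ' k t)
      (hle i k t hak hbt)
  calc ∑ i, x i * (∑ k, a i k * ∑ t, p k t * b t) / μ i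
      = ∑ i, ∑ k, ∑ t, x i * a i k * p k t * b t / μ i := by
        simp only [mul_sum, sum_div, mul_assoc]
    _ ≤ ∑ i, ∑ k, ∑ t, x i * a i k * p k t * b t / μ' k t :=
        sum_le_sum fun i _ => sum_le_sum fun k _ => sum_le_sum fun t _ => hterm i k t
    _ = ∑ t, ∑ i, ∑ k, x i * a i k * p k t * b t / μ' k t :=
        (sum_congr rfl fun i _ => sum_comm).trans sum_comm
    _ = ∑ t, b t * ∑ k, p k t * (∑ i, x i * a i k) / μ' k t := by
        refine sum_congr rfl fun t _ => ?_
        simp only [mul_sum, sum_div]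
        rw [sum_comm]
        exact sum_congr rfl fun k _ => sum_congr rfl fun i _ => by ring

noncomputable def rectInf (f : ℝ × ℝ → ℝ) (a b c d : ℝ) : ℝ :=
  sInf (f '' (Icc a b ×ˢ Icc c d))

lemma rectInf_pos {f : ℝ × ℝ → ℝ}
    (hf : ContinuousOn f (Icc (0 : ℝ) 1 ×ˢ Icc (0 : ℝ) 1))
    (hfpos : ∀ z ∈ Icc (0 : ℝ) 1 ×ˢ Icc (0 : ℝ) 1, 0 < f z) {a b c d : ℝ}
    (hab : a ≤ b) (hcd : c ≤ d) (ha : 0 ≤ a) (hb : b ≤ 1) (hc : 0 ≤ c) (hd : d ≤ 1) :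
    0 < rectInf f a b c d := by
  have hrect : Icc a b ×ˢ Icc c d ⊆ Icc (0 : ℝ) 1 ×ˢ Icc (0 : ℝ) 1 :=
    prod_mono (Icc_subset_Icc ha hb) (Icc_subset_Icc hc hd)
  exact (isCompact_Icc.prod isCompact_Icc).sInf_image_pos_s13
    ⟨(a, c), mk_mem_prod (left_mem_Icc.2 hab) (left_mem_Icc.2 hcd)⟩ (hf.mono hrect)
    fun z hz => hfpos z (hrect hz)

lemma rectInf_sub_le_muStarDyadic {f : ℝ × ℝ → ℝ} {K : NNReal}
    (hf : LipschitzOnWith K f (Icc (0 : ℝ) 1 ×ˢ Icc (0 : ℝ) 1))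
    (hfpos : ∀ z ∈ Icc (0 : ℝ) 1 ×ˢ Icc (0 : ℝ) 1, 0 < f z)
    {a b c d : ℝ} (ha : 0 ≤ a) (hb : b ≤ 1) (hc : 0 ≤ c) (hd : d ≤ 1)
    {n : ℕ} {i j : Fin (2 ^ n)}
    (hi : 0 < cellOverlap a b n i) (hj : 0 < cellOverlap c d n j) :
    rectInf f a b c d - K * ((2 : ℝ) ^ n)⁻¹ ≤ muStarDyadic f n i j := by
  have hrect : Icc a b ×ˢ Icc c d ⊆ Icc (0 : ℝ) 1 ×ˢ Icc (0 : ℝ) 1 :=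
    prod_mono (Icc_subset_Icc ha hb) (Icc_subset_Icc hc hd)
  obtain ⟨hxi, hxi'⟩ := max_mem_inter_of_overlap_pos hi
  obtain ⟨hyj, hyj'⟩ := max_mem_inter_of_overlap_pos hj
  refine hf.sInf_image_sub_mul_le_sInf_image hrect (dyadic_square_subset i j)
    ⟨0, forall_mem_image.2 fun z hz => (hfpos z (hrect hz)).le⟩
    ⟨_, mk_mem_prod hxi' hyj'⟩ fun z hz => ⟨_, mk_mem_prod hxi hyj, ?_⟩
  refine Prod.dist_eq.trans_le (max_le ?_ ?_)
  · exact (Real.dist_le_of_mem_Icc hz.1 hxi').trans_eq (dyadic_right_sub_left i)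
  · exact (Real.dist_le_of_mem_Icc hz.2 hyj').trans_eq (dyadic_right_sub_left j)

lemma IsStochastic.sum_mul_lt {H M : ℕ} {p : Fin H → Fin M → ℝ} (hp : IsStochastic p)
    {x : Fin M → ℝ} {r : ℝ} (hx : ∀ m, x m < r) (h : Fin H) : ∑ m, p h m * x m < r := by
  obtain ⟨m₀, hm₀⟩ : ∃ m₀, 0 < p h m₀ := by
    by_contra! hle
    have : ∑ m, p h m = 0 := sum_eq_zero fun m _ => (hle m).antisymm (hp.1 h m).1
    exact one_ne_zero (hp.2 h ▸ this)
  calc ∑ m, p h m * x m < ∑ m, p h m * r :=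
        sum_lt_sum (fun m _ => mul_le_mul_of_nonneg_left (hx m).le (hp.1 h m).1)
          ⟨m₀, mem_univ _, mul_lt_mul_of_pos_left (hx m₀) hm₀⟩
    _ = r := by rw [← sum_mul, hp.2 h, one_mul]

lemma partition_mem_Icc {N : ℕ} {w : Fin (N + 1) → ℝ} (hw0 : w 0 = 0)
    (hw1 : w (Fin.last N) = 1) (hw : Monotone w) (k : Fin (N + 1)) : w k ∈ Icc (0 : ℝ) 1 :=
  ⟨hw0 ▸ hw (Fin.zero_le k), hw1 ▸ hw (Fin.le_last k)⟩

noncomputable def enlargedLoad (f : ℝ × ℝ → ℝ) (g : ℝ → ℝ) {H M : ℕ}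
    (w : Fin (H + 1) → ℝ) (v : Fin (M + 1) → ℝ) (p : Fin H → Fin M → ℝ) (K δ : ℝ)
    (m : Fin M) : ℝ :=
  ∑ h, p h m * (∫ x in (w h.castSucc - δ)..(w h.succ + δ), g x) /
    ((v m.succ - v m.castSucc) *
      (rectInf f (w h.castSucc) (w h.succ) (v m.castSucc) (v m.succ) - K * δ))

lemma dyadicLoad_le_sum_mul_enlargedLoad {f : ℝ × ℝ → ℝ} {K : NNReal}
    (hf : LipschitzOnWith K f (Icc (0 : ℝ) 1 ×ˢ Icc (0 : ℝ) 1))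
    (hfpos : ∀ z ∈ Icc (0 : ℝ) 1 ×ˢ Icc (0 : ℝ) 1, 0 < f z)
    {g : ℝ → ℝ} (hg : Integrable g) (hg0 : ∀ x, 0 ≤ g x) {H M : ℕ}
    {w : Fin (H + 1) → ℝ} (hw0 : w 0 = 0) (hw1 : w (Fin.last H) = 1) (hw : Monotone w)
    {v : Fin (M + 1) → ℝ} (hv0 : v 0 = 0) (hv1 : v (Fin.last M) = 1) (hv : StrictMono v)
    {p : Fin H → Fin M → ℝ} (hp : IsStochastic p) {n : ℕ}
    (hsmall : ∀ (h : Fin H) (m : Fin M), K * ((2 : ℝ) ^ n)⁻¹ <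
      rectInf f (w h.castSucc) (w h.succ) (v m.castSucc) (v m.succ)) (j : Fin (2 ^ n)) :
    ∑ i, (2 : ℝ) ^ n * lamDyadic g n i *
        (∑ h, 2 ^ n * cellOverlap (w h.castSucc) (w h.succ) n i *
          ∑ m, p h m * (cellOverlap (v m.castSucc) (v m.succ) n j / (v m.succ - v m.castSucc))) /
        muStarDyadic f n i j ≤
      ∑ m, 2 ^ n * cellOverlap (v m.castSucc) (v m.succ) n j *
        enlargedLoad f g w v p K ((2 : ℝ) ^ n)⁻¹ m := by
  set δ : ℝ := ((2 : ℝ) ^ n)⁻¹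
  have hwI := partition_mem_Icc hw0 hw1 hw
  have hvI := partition_mem_Icc hv0 hv1 hv.monotone
  have hA := isStochastic_cellWeights hw0 hw1 hw n
  have hB := isStochastic_cellShares hv0 hv1 hv n
  have hμ' (h : Fin H) (m : Fin M) := sub_pos.2 (hsmall h m)
  have hgroup (h : Fin H) : ∑ i, 2 ^ n * lamDyadic g n i *
      (2 ^ n * cellOverlap (w h.castSucc) (w h.succ) n i) ≤
      2 ^ n * ∫ x in (w h.castSucc - δ)..(w h.succ + δ), g x := by
    calc _ = 2 ^ n * ∑ i, 2 ^ n * cellOverlap (w h.castSucc) (w h.succ) n i *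
          lamDyadic g n i := by
          rw [mul_sum]; exact sum_congr rfl fun i _ => by ring
      _ ≤ _ := by
          gcongr
          exact sum_cellOverlap_mul_integral_le hg hg0 (hw (Fin.castSucc_le_succ h)) n
  calc _ ≤ ∑ m, cellOverlap (v m.castSucc) (v m.succ) n j / (v m.succ - v m.castSucc) *
          ∑ h, p h m * (∑ i, 2 ^ n * lamDyadic g n i *
            (2 ^ n * cellOverlap (w h.castSucc) (w h.succ) n i)) /
          (rectInf f (w h.castSucc) (w h.succ) (v m.castSucc) (v m.succ) - K * δ) := by
        refine sum_mul_sum_mul_sum_div_le (fun i => ?_) (fun i h => (hA.1 i h).1)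
          (fun h m => (hp.1 h m).1) (fun m => (hB.1 m j).1) hμ' fun i h m hih hmj => ?_
        · exact mul_nonneg (by positivity) (intervalIntegral.integral_nonneg
            (dyadic_left_le_right i) fun x _ => hg0 x)
        · exact rectInf_sub_le_muStarDyadic hf hfpos (hwI _).1 (hwI _).2 (hvI _).1 (hvI _).2
            (pos_of_mul_pos_right hih (by positivity))
            ((div_pos_iff_of_pos_right (sub_pos.2 (hv (Fin.castSucc_lt_succ (i := m))))).1 hmj)
    _ ≤ ∑ m, cellOverlap (v m.castSucc) (v m.succ) n j / (v m.succ - v m.castSucc) *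
          ∑ h, p h m * (2 ^ n * ∫ x in (w h.castSucc - δ)..(w h.succ + δ), g x) /
          (rectInf f (w h.castSucc) (w h.succ) (v m.castSucc) (v m.succ) - K * δ) := by
        gcongr with m _ h _
        · exact (hB.1 m j).1
        · exact (hμ' h m).le
        · exact (hp.1 h m).1
        · exact hgroup h
    _ = _ := by
        refine sum_congr rfl fun m _ => ?_
        simp only [enlargedLoad, mul_sum, ← div_div]
        exact sum_congr rfl fun h _ => by ring

theorem exists_isStochastic_dyadicLoad_lt {f : ℝ × ℝ → ℝ} {K : NNReal}
    (hf : LipschitzOnWith K f (Icc (0 : ℝ) 1 ×ˢ Icc (0 : ℝ) 1))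
    (hfpos : ∀ z ∈ Icc (0 : ℝ) 1 ×ˢ Icc (0 : ℝ) 1, 0 < f z)
    {g : ℝ → ℝ} (hg : Integrable g) (hg0 : ∀ x, 0 ≤ g x) {H M : ℕ}
    {w : Fin (H + 1) → ℝ} (hw0 : w 0 = 0) (hw1 : w (Fin.last H) = 1) (hw : Monotone w)
    {v : Fin (M + 1) → ℝ} (hv0 : v 0 = 0) (hv1 : v (Fin.last M) = 1) (hv : StrictMono v)
    {p : Fin H → Fin M → ℝ} (hp : IsStochastic p) {rstar : ℝ} {n : ℕ}
    (hsmall : ∀ (h : Fin H) (m : Fin M), K * ((2 : ℝ) ^ n)⁻¹ <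
      rectInf f (w h.castSucc) (w h.succ) (v m.castSucc) (v m.succ))
    (hbound : ∀ m, enlargedLoad f g w v p K ((2 : ℝ) ^ n)⁻¹ m < rstar) :
    ∃ p' : Fin (2 ^ n) → Fin (2 ^ n) → ℝ, IsStochastic p' ∧
      ∀ j, ∑ i, (2 ^ n : ℝ) * lamDyadic g n i * p' i j / muStarDyadic f n i j < rstar :=
  ⟨_, (isStochastic_cellWeights hw0 hw1 hw n).mul (hp.mul (isStochastic_cellShares hv0 hv1 hv n)),
    fun j => (dyadicLoad_le_sum_mul_enlargedLoad hf hfpos hg hg0 hw0 hw1 hw hv0 hv1 hv hp hsmall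
      j).trans_lt ((isStochastic_cellWeights hv0 hv1 hv.monotone n).sum_mul_lt hbound j)⟩

lemma continuous_intervalIntegral_sub_add {g : ℝ → ℝ} (hg : Integrable g) (a b : ℝ) :
    Continuous fun δ => ∫ x in (a - δ)..(b + δ), g x := by
  have hsplit (δ : ℝ) : ∫ x in (a - δ)..(b + δ), g x =
      (∫ x in (0 : ℝ)..(b + δ), g x) - ∫ x in (0 : ℝ)..(a - δ), g x :=
    (intervalIntegral.integral_interval_sub_left hg.intervalIntegrable
      hg.intervalIntegrable).symm
  simp only [hsplit]
  have hF := intervalIntegral.continuous_primitive (fun _ _ => hg.intervalIntegrable) 0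
  exact (hF.comp (continuous_const.add continuous_id)).sub
    (hF.comp (continuous_const.sub continuous_id))

lemma continuousAt_enlargedLoad {f : ℝ × ℝ → ℝ} {g : ℝ → ℝ} (hg : Integrable g)
    {H M : ℕ} {w : Fin (H + 1) → ℝ} {v : Fin (M + 1) → ℝ} (p : Fin H → Fin M → ℝ)
    (K : ℝ) {m : Fin M}
    (hL : v m.succ - v m.castSucc ≠ 0)
    (hμ : ∀ h : Fin H, rectInf f (w h.castSucc) (w h.succ) (v m.castSucc) (v m.succ) ≠ 0) :
    ContinuousAt (fun δ => enlargedLoad f g w v p K δ m) 0 := by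
  refine tendsto_finsetSum _ fun h _ => ?_
  exact (continuousAt_const.mul (continuous_intervalIntegral_sub_add hg _ _).continuousAt).div
    (continuousAt_const.mul (continuousAt_const.sub (continuousAt_const.mul continuousAt_id)))
    (by simpa using mul_ne_zero hL (hμ h))

lemma intervalIntegral_indicator_unitInterval {lam : ℝ → ℝ} {a b : ℝ}
    (ha : a ∈ Icc (0 : ℝ) 1) (hb : b ∈ Icc (0 : ℝ) 1) :
    ∫ x in a..b, indicator (Icc (0 : ℝ) 1) lam x = ∫ x in a..b, lam x :=
  intervalIntegral.integral_congr fun _ hx => indicator_of_mem (uIcc_subset_Icc ha hb hx) lam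

lemma lamDyadic_indicator_unitInterval (lam : ℝ → ℝ) (n : ℕ) :
    lamDyadic (indicator (Icc (0 : ℝ) 1) lam) n = lamDyadic lam n := funext fun i =>
  intervalIntegral_indicator_unitInterval
    ⟨dyadic_left_nonneg i, (dyadic_left_le_right i).trans (dyadic_right_le_one i)⟩
    ⟨(dyadic_left_nonneg i).trans (dyadic_left_le_right i), dyadic_right_le_one i⟩

lemma enlargedLoad_indicator_unitInterval_zero (f : ℝ × ℝ → ℝ) (lam : ℝ → ℝ)
    {H M : ℕ} {w : Fin (H + 1) → ℝ} (hw0 : w 0 = 0) (hw1 : w (Fin.last H) = 1)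
    (hw : Monotone w) (v : Fin (M + 1) → ℝ) (p : Fin H → Fin M → ℝ) (K : ℝ)
    (m : Fin M) :
    enlargedLoad f (indicator (Icc (0 : ℝ) 1) lam) w v p K 0 m =
      ∑ h, p h m * (∫ x in (w h.castSucc)..(w h.succ), lam x) /
        ((v m.succ - v m.castSucc) *
          sInf (f '' (Icc (w h.castSucc) (w h.succ) ×ˢ Icc (v m.castSucc) (v m.succ)))) := by
  have hwI := partition_mem_Icc hw0 hw1 hw
  simp only [enlargedLoad, sub_zero, add_zero, mul_zero]
  exact sum_congr rfl fun h _ => by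
    rw [intervalIntegral_indicator_unitInterval (hwI _) (hwI _)]; rfl

lemma exists_dyadic_mesh {f : ℝ × ℝ → ℝ} {g : ℝ → ℝ} (hg : Integrable g) {H M : ℕ}
    {w : Fin (H + 1) → ℝ} {v : Fin (M + 1) → ℝ} {p : Fin H → Fin M → ℝ} {K : NNReal}
    {rstar : ℝ} (hL : ∀ m : Fin M, 0 < v m.succ - v m.castSucc)
    (hμ : ∀ (h : Fin H) (m : Fin M),
      0 < rectInf f (w h.castSucc) (w h.succ) (v m.castSucc) (v m.succ))
    (hload : ∀ m, enlargedLoad f g w v p K 0 m < rstar) :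
    ∃ n : ℕ, (∀ (h : Fin H) (m : Fin M), K * ((2 : ℝ) ^ n)⁻¹ <
        rectInf f (w h.castSucc) (w h.succ) (v m.castSucc) (v m.succ)) ∧
      ∀ m, enlargedLoad f g w v p K ((2 : ℝ) ^ n)⁻¹ m < rstar := by
  have hKδ : Tendsto (fun δ : ℝ => (K : ℝ) * δ) (𝓝 0) (𝓝 0) := by
    simpa using (continuous_const_mul (K : ℝ)).tendsto 0
  have hev : ∀ᶠ δ in 𝓝 (0 : ℝ), (∀ (h : Fin H) (m : Fin M), K * δ <
      rectInf f (w h.castSucc) (w h.succ) (v m.castSucc) (v m.succ)) ∧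
      ∀ m, enlargedLoad f g w v p K δ m < rstar :=
    (eventually_all.2 fun h => eventually_all.2 fun m => hKδ.eventually_lt_const (hμ h m)).and
      (eventually_all.2 fun m => (continuousAt_enlargedLoad hg p K (hL m).ne'
        fun h => (hμ h m).ne').eventually_lt_const (hload m))
  have hδ : Tendsto (fun n : ℕ => ((2 : ℝ) ^ n)⁻¹) atTop (𝓝 0) :=
    tendsto_inv_atTop_zero.comp (tendsto_pow_atTop_atTop_of_one_lt one_lt_two)
  exact (hδ.eventually hev).exists

lemma rhoStar_lt_of_forall_lt {f : ℝ × ℝ → ℝ} {lam : ℝ → ℝ}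
    (hfpos : ∀ z ∈ Icc (0 : ℝ) 1 ×ˢ Icc (0 : ℝ) 1, 0 < f z)
    (hlam : ∀ x ∈ Icc (0 : ℝ) 1, 0 ≤ lam x) {n : ℕ}
    {p : Fin (2 ^ n) → Fin (2 ^ n) → ℝ} (hp : IsStochastic p) {r : ℝ}
    (hlt : ∀ m, ∑ h, (2 ^ n : ℝ) * lamDyadic lam n h * p h m / muStarDyadic f n h m < r) :
    rhoStar f lam n < r := by
  have hlam₀ (i : Fin (2 ^ n)) : 0 ≤ lamDyadic lam n i :=
    intervalIntegral.integral_nonneg (dyadic_left_le_right i) fun x hx =>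
      hlam x ⟨(dyadic_left_nonneg i).trans hx.1, hx.2.trans (dyadic_right_le_one i)⟩
  have hμ₀ (i j : Fin (2 ^ n)) : 0 ≤ muStarDyadic f n i j :=
    Real.sInf_nonneg (forall_mem_image.2 fun z hz => (hfpos z (dyadic_square_subset i j hz)).le)
  have hbdd : BddBelow {r : ℝ | ∃ q : Fin (2 ^ n) → Fin (2 ^ n) → ℝ, IsStochastic q ∧
      r = ⨆ m : Fin (2 ^ n), ∑ h : Fin (2 ^ n),
        (2 ^ n : ℝ) * lamDyadic lam n h * q h m / muStarDyadic f n h m} := by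
    refine ⟨0, ?_⟩
    rintro _ ⟨q, hq, rfl⟩
    exact Real.iSup_nonneg fun m => sum_nonneg fun h _ =>
      div_nonneg (mul_nonneg (mul_nonneg (by positivity) (hlam₀ h)) (hq.1 h m).1) (hμ₀ h m)
  obtain ⟨m₀, hm₀⟩ := exists_eq_ciSup_of_finite (f := fun m : Fin (2 ^ n) =>
    ∑ h : Fin (2 ^ n), (2 ^ n : ℝ) * lamDyadic lam n h * p h m / muStarDyadic f n h m)
  exact (csInf_le hbdd ⟨p, hp, rfl⟩).trans_lt (hm₀ ▸ hlt m₀)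

theorem stmt13_general (f : ℝ × ℝ → ℝ)
    (hfLip : ∃ K : NNReal, LipschitzOnWith K f (Icc (0:ℝ) 1 ×ˢ Icc (0:ℝ) 1))
    (hfpos : ∀ z ∈ Icc (0:ℝ) 1 ×ˢ Icc (0:ℝ) 1, 0 < f z)
    (lam : ℝ → ℝ) (hlam : ∀ x ∈ Icc (0:ℝ) 1, 0 ≤ lam x)
    (hint : IntegrableOn lam (Icc 0 1))
    (H M : ℕ)
    (w : Fin (H + 1) → ℝ) (hw0 : w 0 = 0) (hw1 : w (Fin.last H) = 1)
    (hwmono : StrictMono w)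
    (v : Fin (M + 1) → ℝ) (hv0 : v 0 = 0) (hv1 : v (Fin.last M) = 1)
    (hvmono : StrictMono v)
    (p : Fin H → Fin M → ℝ) (hp : IsStochastic p)
    (rstar : ℝ)
    (hload : (⨆ m : Fin M, ∑ h : Fin H,
        p h m * (∫ x in (w h.castSucc)..(w h.succ), lam x) /
          ((v m.succ - v m.castSucc) *
            sInf (f '' (Icc (w h.castSucc) (w h.succ) ×ˢ
                        Icc (v m.castSucc) (v m.succ))))) < rstar) :
    ∃ n : ℕ,
      (∃ p' : Fin (2 ^ n) → Fin (2 ^ n) → ℝ, IsStochastic p' ∧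
        ∀ m : Fin (2 ^ n), ∑ h : Fin (2 ^ n),
          (2 ^ n : ℝ) * lamDyadic lam n h * p' h m / muStarDyadic f n h m < rstar) ∧
      rhoStar f lam n < rstar := by
  obtain ⟨K, hf⟩ := hfLip
  -- extending `lam` by zero lets the enlarged intervals of `enlargedLoad` leave `[0, 1]`
  have hg : Integrable (indicator (Icc (0 : ℝ) 1) lam) :=
    (integrable_indicator_iff measurableSet_Icc).2 hint
  have hwI := partition_mem_Icc hw0 hw1 hwmono.monotone
  have hvI := partition_mem_Icc hv0 hv1 hvmono.monotone
  have hμ (h : Fin H) (m : Fin M) :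
      0 < rectInf f (w h.castSucc) (w h.succ) (v m.castSucc) (v m.succ) :=
    rectInf_pos hf.continuousOn hfpos (hwmono (Fin.castSucc_lt_succ (i := h))).le
      (hvmono (Fin.castSucc_lt_succ (i := m))).le (hwI _).1 (hwI _).2 (hvI _).1 (hvI _).2
  have hload₀ (m : Fin M) :
      enlargedLoad f (indicator (Icc (0 : ℝ) 1) lam) w v p K 0 m < rstar := by
    rw [enlargedLoad_indicator_unitInterval_zero f lam hw0 hw1 hwmono.monotone]
    exact (le_ciSup (Finite.bddAbove_range _) m).trans_lt hload
  obtain ⟨n, hsmall, hbound⟩ := exists_dyadic_mesh hg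
    (fun m => sub_pos.2 (hvmono (Fin.castSucc_lt_succ (i := m)))) hμ hload₀
  obtain ⟨p', hp', hlt⟩ := exists_isStochastic_dyadicLoad_lt hf hfpos hg
    (indicator_nonneg hlam) hw0 hw1 hwmono.monotone hv0 hv1 hvmono hp hsmall hbound
  rw [lamDyadic_indicator_unitInterval] at hlt
  exact ⟨n, ⟨p', hp', hlt⟩, rhoStar_lt_of_forall_lt hfpos hlam hp' hlt⟩

/-- Lemma C.2: if a Lipschitz, positive `f` admits some
`(w,v,p)`-subcritical partition with maximal load below `ρ*`, then some dyadic
level `n` admits a `2ⁿ×2ⁿ` stochastic matrix `p'` whose load is below `ρ*` for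
every server block; equivalently `ρⁿ < ρ*`. -/
theorem stmt13 (f : ℝ × ℝ → ℝ)
    (hfLip : ∃ K : NNReal, LipschitzOnWith K f (Icc (0:ℝ) 1 ×ˢ Icc (0:ℝ) 1))
    (hfpos : ∀ z ∈ Icc (0:ℝ) 1 ×ˢ Icc (0:ℝ) 1, 0 < f z)
    (lam : ℝ → ℝ) (hlam : ∀ x ∈ Icc (0:ℝ) 1, 0 ≤ lam x)
    (hint : IntegrableOn lam (Icc 0 1))
    (H M : ℕ) (hH : 0 < H) (hM : 0 < M)
    (w : Fin (H + 1) → ℝ) (hw0 : w 0 = 0) (hw1 : w (Fin.last H) = 1)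
    (hwmono : StrictMono w)
    (v : Fin (M + 1) → ℝ) (hv0 : v 0 = 0) (hv1 : v (Fin.last M) = 1)
    (hvmono : StrictMono v)
    (p : Fin H → Fin M → ℝ) (hp : IsStochastic p)
    (rstar : ℝ)
    (hload : (⨆ m : Fin M, ∑ h : Fin H,
        p h m * (∫ x in (w h.castSucc)..(w h.succ), lam x) /
          ((v m.succ - v m.castSucc) *
            sInf (f '' (Icc (w h.castSucc) (w h.succ) ×ˢ
                        Icc (v m.castSucc) (v m.succ))))) < rstar) :
    ∃ n : ℕ,
      (∃ p' : Fin (2 ^ n) → Fin (2 ^ n) → ℝ, IsStochastic p' ∧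
        ∀ m : Fin (2 ^ n), ∑ h : Fin (2 ^ n),
          (2 ^ n : ℝ) * lamDyadic lam n h * p' h m / muStarDyadic f n h m < rstar) ∧
      rhoStar f lam n < rstar :=
  stmt13_general f hfLip hfpos lam hlam hint H M w hw0 hw1 hwmono v hv0 hv1 hvmono p hp rstar hload
end
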